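/- arXiv:1601.04683 — 3 statements merged into one kernel-verified Lean document; each statement's English description precedes it below -/
import Mathlib

section
/- For every k₀ ∈ ℕ there exists a set N ⊆ [-2^{k₀}, 2^{k₀}] ∩ ℤ with |N| ≲ 2^{k₀}/k₀ such that the union over n ∈ N of the sets {2^k + n : 0 ≤ k < k₀} covers at least half of [1, 2^{k₀}] ∩ ℕ, i.e. |⋃_{n∈N} {2^k+n : 0 ≤ k < k₀} ∩ [1,2^{k₀}]| ≥ 2^{k₀}/2. -/
/-!
Every `s ∈ [1, 2^k₀]` is of the form `2^k + n` for `k₀` distinct shifts `n ∈ [-2^k₀, 2^k₀]`, a set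
of `M = 2·2^k₀ + 1` shifts. By double counting, for any set `A` of uncovered points some shift
covers at least `k₀|A|/M` of them, so choosing shifts greedily leaves at most `(1 - k₀/M)^m · 2^k₀`
points uncovered after `m` rounds. Since `(1 - x)^⌈1/x⌉ ≤ e⁻¹ < 1/2`, `m = ⌈M/k₀⌉ ≤ 4·2^k₀/k₀`
rounds cover half of `[1, 2^k₀]`.
-/

open Finset

section GreedyCover

variable {α ι : Type*} (R : α → ι → Prop) [∀ a n, Decidable (R a n)] {I : Finset ι} {k : ℕ}

theorem exists_mul_card_le_mul_card_bipartiteBelow (hI : I.Nonempty) {A : Finset α}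
    (hA : ∀ a ∈ A, k ≤ #(I.bipartiteAbove R a)) :
    ∃ n ∈ I, k * #A ≤ #I * #(A.bipartiteBelow R n) := by
  refine exists_le_of_sum_le hI ?_
  calc ∑ _n ∈ I, k * #A = #I * (#A * k) := by rw [sum_const, smul_eq_mul, mul_comm k]
    _ ≤ #I * ∑ a ∈ A, #(I.bipartiteAbove R a) := by
        gcongr; simpa using card_nsmul_le_sum A _ k hA
    _ = ∑ n ∈ I, #I * #(A.bipartiteBelow R n) := by
        rw [sum_card_bipartiteAbove_eq_sum_card_bipartiteBelow, mul_sum]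

theorem exists_partial_cover_of_le_card_bipartiteAbove [DecidableEq ι] (hI : I.Nonempty)
    (hkI : k ≤ #I) {U : Finset α} (hU : ∀ a ∈ U, k ≤ #(I.bipartiteAbove R a)) (m : ℕ) :
    ∃ S ⊆ I, #S ≤ m ∧
      (#{a ∈ U | ¬∃ n ∈ S, R a n} : ℝ) ≤ (1 - k / #I) ^ m * #U := by
  induction m with
  | zero => exact ⟨∅, empty_subset _, le_rfl, by simp⟩
  | succ m ih =>
    obtain ⟨S, hSI, hSm, hSU⟩ := ih
    set A : Finset α := U.filter (fun a => ¬∃ n ∈ S, R a n)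
    obtain ⟨n, hnI, hn⟩ := exists_mul_card_le_mul_card_bipartiteBelow R hI (A := A)
      (fun a ha => hU a (mem_filter.1 ha).1)
    have hA' : {a ∈ U | ¬∃ n' ∈ insert n S, R a n'} = {a ∈ A | ¬R a n} := by
      ext a; simp only [A, mem_filter, mem_insert, exists_eq_or_imp, not_or]; tauto
    have hIpos : (0 : ℝ) < #I := by exact_mod_cast hI.card_pos
    have hstep : (#{a ∈ A | ¬R a n} : ℝ) ≤ (1 - k / #I) * #A := by
      have hsplit : (#(A.bipartiteBelow R n) + #{a ∈ A | ¬R a n} : ℝ) = #A := by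
        exact_mod_cast card_filter_add_card_filter_not _
      have hn' : (k * #A : ℝ) / #I ≤ #(A.bipartiteBelow R n) := by
        rw [div_le_iff₀ hIpos, mul_comm _ (#I : ℝ)]; exact_mod_cast hn
      rw [sub_mul, one_mul, div_mul_eq_mul_div]
      linarith
    refine ⟨insert n S, insert_subset hnI hSI, (card_insert_le _ _).trans (by omega), ?_⟩
    rw [hA', pow_succ', mul_assoc]
    have : (0 : ℝ) ≤ 1 - k / #I := by
      rw [sub_nonneg, div_le_one hIpos]; exact_mod_cast hkI
    exact hstep.trans (mul_le_mul_of_nonneg_left hSU this)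

end GreedyCover

theorem one_sub_pow_le_half {a : ℝ} {m : ℕ} (ha : a ≤ 1) (hm : 1 ≤ m * a) :
    (1 - a) ^ m ≤ 1 / 2 :=
  calc (1 - a) ^ m ≤ Real.exp (-a) ^ m :=
        pow_le_pow_left₀ (sub_nonneg.2 ha) (Real.one_sub_le_exp_neg a) m
    _ = Real.exp (-(m * a)) := by rw [← Real.exp_nat_mul]; ring_nf
    _ ≤ Real.exp (-1) := Real.exp_le_exp.2 (by linarith)
    _ ≤ 1 / 2 := Real.exp_neg_one_lt_half.le

theorem card_Icc_neg_pow_two (k₀ : ℕ) : #(Icc (-(2 ^ k₀) : ℤ) (2 ^ k₀)) = 2 * 2 ^ k₀ + 1 := by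
  have hcast : ((2 ^ k₀ : ℕ) : ℤ) = 2 ^ k₀ := by norm_num
  rw [Int.card_Icc]
  omega

theorem le_card_bipartiteAbove_pow_two_add {k₀ s : ℕ} (hs : s ∈ Icc 1 (2 ^ k₀)) :
    k₀ ≤ #((Icc (-(2 ^ k₀) : ℤ) (2 ^ k₀)).bipartiteAbove
      (fun (s : ℕ) (n : ℤ) => ∃ k < k₀, (s : ℤ) = 2 ^ k + n) s) := by
  obtain ⟨hs1, hs2⟩ := mem_Icc.1 hs
  have hinj : Function.Injective fun k : ℕ => (s : ℤ) - 2 ^ k := fun a b hab =>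
    Nat.pow_right_injective le_rfl (by simpa using hab)
  calc k₀ = #((range k₀).image fun k : ℕ => (s : ℤ) - 2 ^ k) := by
        rw [card_image_of_injective _ hinj, card_range]
    _ ≤ _ := card_le_card fun n hn => by
        obtain ⟨k, hk, rfl⟩ := mem_image.1 hn
        have hk' : (2 : ℤ) ^ k ≤ 2 ^ k₀ := pow_le_pow_right₀ (by norm_num) (mem_range.1 hk).le
        have : (1 : ℤ) ≤ 2 ^ k := one_le_pow₀ (by norm_num)
        have : (1 : ℤ) ≤ s ∧ (s : ℤ) ≤ 2 ^ k₀ := ⟨by exact_mod_cast hs1, by exact_mod_cast hs2⟩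
        exact (mem_bipartiteAbove _).2 ⟨mem_Icc.2 ⟨by omega, by omega⟩, k, mem_range.1 hk, by ring⟩

theorem exists_pow_two_add_cover (k₀ m : ℕ) :
    ∃ N ⊆ Icc (-(2 ^ k₀) : ℤ) (2 ^ k₀), #N ≤ m ∧
      (1 - (1 - k₀ / (2 * 2 ^ k₀ + 1)) ^ m) * 2 ^ k₀ ≤
        (#((Icc 1 (2 ^ k₀)).filter fun s : ℕ => ∃ n ∈ N, ∃ k < k₀, (s : ℤ) = 2 ^ k + n) : ℝ) := by
  have hI : (Icc (-(2 ^ k₀) : ℤ) (2 ^ k₀)).Nonempty := nonempty_Icc.2 (neg_le_self (by positivity))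
  have hkI : k₀ ≤ #(Icc (-(2 ^ k₀) : ℤ) (2 ^ k₀)) := by
    rw [card_Icc_neg_pow_two]; linarith [k₀.lt_two_pow_self]
  obtain ⟨N, hNI, hNm, hNU⟩ := exists_partial_cover_of_le_card_bipartiteAbove _ hI hkI
    (fun s hs => le_card_bipartiteAbove_pow_two_add hs) m
  refine ⟨N, hNI, hNm, ?_⟩
  have hsplit := card_filter_add_card_filter_not (s := Icc 1 (2 ^ k₀))
    fun s : ℕ => ∃ n ∈ N, ∃ k < k₀, (s : ℤ) = 2 ^ k + n
  rw [card_Icc_neg_pow_two] at hNU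
  rw [Nat.card_Icc, add_tsub_cancel_right] at hsplit hNU
  have hsplit' := congrArg (Nat.cast (R := ℝ)) hsplit
  push_cast at hNU hsplit'
  linarith

open Classical in
/-- Greedy covering: there is `N ⊆ [-2^k₀, 2^k₀] ∩ ℤ` with `|N| ≲ 2^k₀/k₀` whose
translates of `{2^k : 0 ≤ k < k₀}` cover at least half of `[1, 2^k₀] ∩ ℕ`. -/
theorem stmt_2 :
    ∃ C : ℝ, 0 < C ∧ ∀ k₀ : ℕ, 1 ≤ k₀ →
      ∃ N : Finset ℤ, (↑N : Set ℤ) ⊆ Set.Icc (-(2 ^ k₀) : ℤ) (2 ^ k₀) ∧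
        (N.card : ℝ) ≤ C * 2 ^ k₀ / k₀ ∧
        (2 : ℝ) ^ k₀ / 2 ≤
          (((Finset.Icc 1 (2 ^ k₀)).filter
            (fun s : ℕ => ∃ n ∈ N, ∃ k < k₀, (s : ℤ) = 2 ^ k + n)).card : ℝ) := by
  refine ⟨4, by norm_num, fun k₀ hk => ?_⟩
  set M : ℝ := 2 * 2 ^ k₀ + 1
  have hk₀ : (0 : ℝ) < k₀ := by exact_mod_cast hk
  have hk₀M : (k₀ : ℝ) + 1 ≤ 2 ^ k₀ := by exact_mod_cast k₀.lt_two_pow_self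
  obtain ⟨N, hNI, hNm, hN⟩ := exists_pow_two_add_cover k₀ ⌈M / k₀⌉₊
  refine ⟨N, fun n hn => mem_Icc.1 (hNI hn), ?_, ?_⟩
  · calc (#N : ℝ) ≤ ⌈M / k₀⌉₊ := by exact_mod_cast hNm
      _ ≤ M / k₀ + 1 := (Nat.ceil_lt_add_one (by positivity)).le
      _ ≤ 4 * 2 ^ k₀ / k₀ := by rw [div_add_one hk₀.ne']; gcongr; linarith
  · have hhalf : (1 - k₀ / M) ^ ⌈M / k₀⌉₊ ≤ 1 / 2 := by
      refine one_sub_pow_le_half ((div_le_one (by positivity)).2 (by linarith)) ?_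
      calc (1 : ℝ) = M / k₀ * (k₀ / M) := by field_simp [hk₀.ne', (by positivity : 0 < M).ne']
        _ ≤ _ := by gcongr; exact Nat.le_ceil _
    calc (2 : ℝ) ^ k₀ / 2 ≤ (1 - (1 - k₀ / M) ^ ⌈M / k₀⌉₊) * 2 ^ k₀ := by
          rw [div_eq_mul_inv, mul_comm]; gcongr; linarith
      _ ≤ _ := hN
end

section
/- Let k₀ ∈ ℕ and let K ⊆ [1, 2^{k₀-1}] be a finite set of reals with |K| = k₀ and pairwise distances at least 1. Then for any measurable S ⊆ [1, 2^{k₀}] there exists θ ∈ [-2^{k₀}, 2^{k₀}] such that the Lebesgue measure of S ∩ ⋃_{k∈K} [k+θ-1/2, k+θ+1/2] is at least k₀·|S|/2^{k₀+1}. -/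
open MeasureTheory in
/-- Continuous averaging lemma: for a separated `k₀`-point set `K ⊆ [1, 2^(k₀-1)]` and
measurable `S ⊆ [1, 2^k₀]` there is a shift `θ ∈ [-2^k₀, 2^k₀]` with
`|S ∩ ⋃_{k∈K} [k+θ-1/2, k+θ+1/2]| ≥ k₀|S|/2^(k₀+1)`. -/
theorem stmt_3 (k₀ : ℕ) (K : Finset ℝ)
    (hK₁ : (↑K : Set ℝ) ⊆ Set.Icc 1 (2 ^ (k₀ - 1)))
    (hK₂ : K.card = k₀)
    (hsep : ∀ x ∈ K, ∀ y ∈ K, x ≠ y → 1 ≤ |x - y|)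
    (S : Set ℝ) (hSm : MeasurableSet S) (hSsub : S ⊆ Set.Icc 1 (2 ^ k₀)) :
    ∃ θ ∈ Set.Icc (-(2 ^ k₀) : ℝ) (2 ^ k₀),
      (k₀ : ENNReal) * volume S / 2 ^ (k₀ + 1) ≤
        volume (S ∩ ⋃ k ∈ K, Set.Icc (k + θ - 1/2) (k + θ + 1/2)) := by
  classical
  have h2pos : (0:ℝ) < 2 ^ k₀ := by positivity
  by_cases hc0 : (k₀ : ENNReal) * volume S = 0
  · exact ⟨0, ⟨by linarith, by linarith⟩, by simp [hc0]⟩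
  have hk₀ : 1 ≤ k₀ := by
    rcases Nat.eq_zero_or_pos k₀ with h | h
    · simp [h] at hc0
    · exact h
  set I : Set ℝ := Set.Icc (-(2 ^ k₀) : ℝ) (2 ^ k₀) with hIdef
  set U : Set ℝ := ⋃ k ∈ K, Set.Ioc (k - 1/2) (k + 1/2) with hUdef
  have hU : MeasurableSet U :=
    K.measurableSet_biUnion (fun k _ => measurableSet_Ioc)
  set A : Set (ℝ × ℝ) := {p | p.2 ∈ S ∧ p.2 - p.1 ∈ U} with hAdef
  have hA : MeasurableSet A := by
    have : A = Prod.snd ⁻¹' S ∩ (fun p : ℝ × ℝ => p.2 - p.1) ⁻¹' U := rfl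
    rw [this]
    exact (hSm.preimage measurable_snd).inter (hU.preimage (measurable_snd.sub measurable_fst))
  set F : ℝ → ENNReal := fun θ => volume (Prod.mk θ ⁻¹' A) with hFdef
  have hpow : (2:ℝ) ^ k₀ = 2 * 2 ^ (k₀ - 1) := by
    rw [← pow_succ']
    congr 1
    omega
  have h1le : (1:ℝ) ≤ 2 ^ (k₀ - 1) := one_le_pow₀ (by norm_num)
  -- the key integral identity
  have hize : ∫⁻ θ in I, F θ ∂volume = (k₀ : ENNReal) * volume S := by
    have h1 : ∫⁻ θ in I, F θ ∂volume = ((volume.restrict I).prod volume) A :=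
      (Measure.prod_apply hA).symm
    rw [h1, Measure.prod_apply_symm hA]
    have h2 : ∀ x : ℝ, (volume.restrict I) ((fun θ => (θ, x)) ⁻¹' A)
        = S.indicator (fun _ => (k₀ : ENNReal)) x := by
      intro x
      by_cases hx : x ∈ S
      · have hxI : x ∈ Set.Icc (1:ℝ) (2 ^ k₀) := hSsub hx
        have hTeq : ((fun θ => (θ, x)) ⁻¹' A)
            = ⋃ k ∈ K, Set.Ico (x - k - 1/2) (x - k + 1/2) := by
          ext θ
          simp only [A, U, Set.mem_preimage, Set.mem_setOf_eq, Set.mem_iUnion, Set.mem_Ioc,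
            Set.mem_Ico, hx, true_and]
          constructor
          · rintro ⟨k, hk, h₁, h₂⟩
            exact ⟨k, hk, by linarith, by linarith⟩
          · rintro ⟨k, hk, h₁, h₂⟩
            exact ⟨k, hk, by linarith, by linarith⟩
        have hTm : ∀ k ∈ K, MeasurableSet (Set.Ico (x - k - 1/2) (x - k + 1/2)) :=
          fun k _ => measurableSet_Ico
        have hTmeas : MeasurableSet (⋃ k ∈ K, Set.Ico (x - k - 1/2) (x - k + 1/2)) :=
          K.measurableSet_biUnion hTm
        have hTsub : (⋃ k ∈ K, Set.Ico (x - k - 1/2) (x - k + 1/2)) ⊆ I := by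
          intro θ hθ
          rcases Set.mem_iUnion₂.mp hθ with ⟨k, hkK, hθk⟩
          have hkb := hK₁ hkK
          rcases hkb with ⟨hk1, hk2⟩
          rcases hθk with ⟨hθ1, hθ2⟩
          rcases hxI with ⟨hx1, hx2⟩
          refine ⟨by nlinarith, by nlinarith⟩
        have hdisj : (↑K : Set ℝ).PairwiseDisjoint
            (fun k => Set.Ico (x - k - 1/2) (x - k + 1/2)) := by
          intro a ha b hb hab
          have h := hsep a ha b hb hab
          simp only [Function.onFun]
          rw [Set.Ico_disjoint_Ico]
          rcases le_abs.mp h with h' | h'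
          · exact le_trans (min_le_left _ _) (le_trans (by linarith) (le_max_right _ _))
          · exact le_trans (min_le_right _ _) (le_trans (by linarith) (le_max_left _ _))
        rw [hTeq, Measure.restrict_apply hTmeas,
          Set.inter_eq_self_of_subset_left hTsub,
          measure_biUnion_finset hdisj hTm]
        have : ∀ k ∈ K, volume (Set.Ico (x - k - 1/2) (x - k + 1/2)) = 1 := by
          intro k _
          rw [Real.volume_Ico]
          norm_num
        rw [Finset.sum_congr rfl this, Finset.sum_const, hK₂]
        simp [hx]
      · have : ((fun θ => (θ, x)) ⁻¹' A) = ∅ := by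
          ext θ
          simp [A, hx]
        rw [this]
        simp [hx]
    simp_rw [h2]
    rw [lintegral_indicator_const hSm]
  -- volume of I
  have hvolI : volume I = 2 ^ (k₀ + 1) := by
    rw [hIdef, Real.volume_Icc]
    rw [sub_neg_eq_add, ← two_mul, ← pow_succ']
    rw [ENNReal.ofReal_pow (by norm_num)]
    norm_num
  set c : ENNReal := (k₀ : ENNReal) * volume S / 2 ^ (k₀ + 1) with hcdef
  by_contra hcon
  push_neg at hcon
  have hFlt : ∀ θ ∈ I, F θ < c := by
    intro θ hθ
    refine lt_of_le_of_lt (measure_mono ?_) (hcon θ hθ)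
    rintro x ⟨hxS, hxU⟩
    refine ⟨hxS, ?_⟩
    rcases Set.mem_iUnion₂.mp hxU with ⟨k, hkK, h₁, h₂⟩
    exact Set.mem_iUnion₂.mpr ⟨k, hkK, Set.mem_Icc.mpr ⟨by linarith, by linarith⟩⟩
  have hSfin : volume S ≠ ⊤ :=
    (lt_of_le_of_lt (measure_mono hSsub) measure_Icc_lt_top).ne
  have hmulfin : (k₀ : ENNReal) * volume S ≠ ⊤ :=
    ENNReal.mul_ne_top (ENNReal.natCast_ne_top _) hSfin
  have h2ne0 : (2 : ENNReal) ^ (k₀ + 1) ≠ 0 := by positivity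
  have h2netop : (2 : ENNReal) ^ (k₀ + 1) ≠ ⊤ := by
    exact ENNReal.pow_ne_top (by norm_num)
  have hcfin : c ≠ ⊤ := by
    rw [hcdef]
    exact (ENNReal.div_lt_top hmulfin h2ne0).ne
  have hμne : (volume.restrict I : Measure ℝ) ≠ 0 := by
    intro h
    rw [Measure.restrict_eq_zero, hvolI] at h
    exact h2ne0 h
  have hFfin : ∫⁻ θ in I, F θ ∂volume ≠ ⊤ := by
    rw [hize]; exact hmulfin
  have hlt : ∫⁻ θ in I, F θ ∂volume < ∫⁻ _ in I, c ∂volume :=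
    lintegral_strict_mono hμne aemeasurable_const hFfin
      ((ae_restrict_iff' measurableSet_Icc).mpr (ae_of_all _ hFlt))
  rw [hize, setLIntegral_const, hvolI] at hlt
  rw [hcdef, ENNReal.div_mul_cancel h2ne0 h2netop] at hlt
  exact lt_irrefl _ hlt
end

section
/- Let φ ∈ 𝒮(ℝ) be a Schwartz function with 1_{[-1/4,1/4]} ≤ φ̂ ≤ 1_{[-1/2,1/2]}, and for N ∈ ℕ let f_N(x) = Σ_{1≤n≤N} φ(x-n) e^{2πinx}. Then for every 1 ≤ p < ∞, ‖f_N‖_{L^p(ℝ)} ≍_p N^{1/p}, with implicit constants independent of N. -/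
/-!
Both the `Lᵖ` upper and lower bounds follow by interpolation from three estimates on
`f_N = ∑ gₙ`, `gₙ(x) = φ(x - n) e^{2πinx}`:

* `‖f_N‖_∞ ≤ M` uniformly in `N`, since the rapid decay of `φ` makes `∑ₙ |φ(x - n)|` bounded;
* `‖f_N‖₁ ≤ N ‖φ‖₁`, by the triangle inequality;
* `‖f_N‖₂² = N ‖φ‖₂²`, since `ĝₙ(ξ) = e^{…} φ̂(ξ - n)` is supported in `[n - 1/2, n + 1/2]`, so by
  Plancherel the `gₙ` are pairwise orthogonal; and `‖φ‖₂ > 0` because `φ̂(0) = 1`.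

Then `‖f_N‖ₚᵖ ≤ M^{p-1} ‖f_N‖₁` gives the upper bound; for `p ≤ 2` the lower bound comes from
`‖f_N‖₂² ≤ M^{2-p} ‖f_N‖ₚᵖ`, and for `p > 2` from Hölder, `‖f_N‖₂² ≤ ‖f_N‖ₚ ‖f_N‖_{p'}`, together
with the upper bound for the conjugate exponent `p'`.
-/

open MeasureTheory FourierTransform Finset Filter Asymptotics

section Fourier

variable {V E : Type*} [NormedAddCommGroup V] [InnerProductSpace ℝ V] [FiniteDimensional ℝ V]
  [MeasurableSpace V] [BorelSpace V] [NormedAddCommGroup E] [NormedSpace ℂ E]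

theorem Real.fourier_comp_sub_right (f : V → E) (a ξ : V) :
    𝓕 (fun x ↦ f (x - a)) ξ = 𝐞 (-inner ℝ a ξ) • 𝓕 f ξ := by
  have h := congrFun (VectorFourier.fourierIntegral_comp_add_right 𝐞 volume (innerₗ V) f (-a)) ξ
  simp only [Function.comp_def, ← sub_eq_add_neg, map_neg, LinearMap.neg_apply] at h
  exact h

theorem Real.fourier_fourierChar_smul (f : V → E) (a ξ : V) :
    𝓕 (fun x ↦ 𝐞 (inner ℝ x a) • f x) ξ = 𝓕 f (ξ - a) := by
  simp only [Real.fourier_eq, smul_smul, ← AddChar.map_add_eq_mul, inner_sub_right]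
  ring_nf

theorem Real.integral_inner_fourier_fourier {H : Type*} [NormedAddCommGroup H]
    [InnerProductSpace ℂ H] [CompleteSpace H] {f g : V → H} (hf : Integrable f)
    (hg : Integrable g) (hgc : Continuous g) (hFg : Integrable (𝓕 g)) :
    ∫ ξ, inner ℂ (𝓕 f ξ) (𝓕 g ξ) = ∫ x, inner ℂ (f x) (g x) := by
  have h := VectorFourier.integral_sesq_fourierIntegral_eq_neg_flip (innerSL ℂ) (L := innerₗ V)
    Real.continuous_fourierChar continuous_inner hf hFg
  rw [flip_innerₗ] at h
  calc _ = ∫ x, inner ℂ (f x) (𝓕⁻ (𝓕 g) x) := h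
    _ = _ := by rw [hgc.fourierInv_fourier_eq hg hFg]

end Fourier

theorem integral_norm_sum_sq_of_orthogonal {α ι 𝕜 H : Type*} [MeasurableSpace α]
    {μ : Measure α} [RCLike 𝕜] [NormedAddCommGroup H] [InnerProductSpace 𝕜 H] (s : Finset ι)
    {g : ι → α → H} (hg : ∀ i ∈ s, MemLp (g i) 2 μ)
    (horth : ∀ i ∈ s, ∀ j ∈ s, i ≠ j → ∫ x, inner 𝕜 (g i x) (g j x) ∂μ = 0) :
    ∫ x, ‖∑ i ∈ s, g i x‖ ^ 2 ∂μ = ∑ i ∈ s, ∫ x, ‖g i x‖ ^ 2 ∂μ := by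
  have hint : ∀ i ∈ s, ∀ j ∈ s, Integrable (fun x ↦ inner 𝕜 (g i x) (g j x)) μ := by
    intro i hi j hj
    refine (L2.integrable_inner (𝕜 := 𝕜) (hg i hi).toLp (hg j hj).toLp).congr ?_
    filter_upwards [(hg i hi).coeFn_toLp, (hg j hj).coeFn_toLp] with x hxi hxj
    rw [hxi, hxj]
  apply RCLike.ofReal_injective (K := 𝕜)
  simp only [RCLike.ofReal_sum, ← integral_ofReal, RCLike.ofReal_pow,
    ← inner_self_eq_norm_sq_to_K, sum_inner, inner_sum]
  rw [integral_finsetSum _ fun j hj ↦ integrable_finsetSum _ fun i hi ↦ hint i hi j hj]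
  refine sum_congr rfl fun j hj ↦ ?_
  rw [integral_finsetSum _ fun i hi ↦ hint i hi j hj,
    sum_eq_single j (fun i hi hij ↦ horth i hi j hj hij) (fun h ↦ absurd hj h)]

theorem exists_sum_norm_comp_sub_int_le {E : Type*} [NormedAddCommGroup E] {f : ℝ → E}
    (hc : Continuous f) {b : ℝ} (hb : 1 < b) (hf : f =O[cocompact ℝ] (|·| ^ (-b))) :
    ∃ M, ∀ (x : ℝ) (s : Finset ℤ), ∑ n ∈ s, ‖f (x - n)‖ ≤ M := by
  let F : C(ℝ, E) := ⟨f, hc⟩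
  let K : TopologicalSpace.Compacts ℝ := ⟨Set.Icc 0 1, isCompact_Icc⟩
  set a : ℤ → ℝ := fun n ↦ ‖(F.comp (ContinuousMap.addRight n)).restrict K‖
  have ha : Summable a := summable_of_isBigO (Real.summable_abs_int_rpow hb)
    ((isBigO_norm_restrict_cocompact F (zero_lt_one.trans hb) hf K).comp_tendsto
      Int.tendsto_coe_cofinite)
  refine ⟨∑' n, a n, fun x s ↦ ?_⟩
  -- `x - n = fract x + (⌊x⌋ - n)` with `fract x ∈ K`.
  have hterm (n : ℤ) : ‖f (x - n)‖ ≤ a (⌊x⌋ - n) := by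
    refine (le_of_eq ?_).trans (((F.comp (ContinuousMap.addRight ((⌊x⌋ - n : ℤ) : ℝ))).restrict
      K).norm_coe_le_norm (⟨Int.fract x, Int.fract_nonneg x, (Int.fract_lt_one x).le⟩ : K))
    change ‖f _‖ = ‖f (Int.fract x + ((⌊x⌋ - n : ℤ) : ℝ))‖
    rw [Int.fract]
    push_cast
    ring_nf
  calc ∑ n ∈ s, ‖f (x - n)‖ ≤ ∑ n ∈ s, a (⌊x⌋ - n) := sum_le_sum fun n _ ↦ hterm n
    _ ≤ ∑' n, a (⌊x⌋ - n) :=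
      (ha.comp_injective sub_right_injective).sum_le_tsum s fun _ _ ↦ norm_nonneg _
    _ = ∑' n, a n := (Equiv.subLeft ⌊x⌋).tsum_eq a

section Interpolation

variable {α E : Type*} [MeasurableSpace α] {μ : Measure α} [NormedAddCommGroup E] {f : α → E}

theorem eLpNorm_ofReal_eq_lintegral_rpow {p : ℝ} (hp : 0 < p) (f : α → E) :
    eLpNorm f (ENNReal.ofReal p) μ = (∫⁻ x, ‖f x‖ₑ ^ p ∂μ) ^ (1 / p) := by
  rw [eLpNorm_eq_lintegral_rpow_enorm_toReal (by simpa using hp) ENNReal.ofReal_ne_top,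
    ENNReal.toReal_ofReal hp.le]

theorem lintegral_enorm_rpow_le_of_norm_le {M p q : ℝ} (hf : ∀ x, ‖f x‖ ≤ M) (hp : 0 ≤ p)
    (hpq : p ≤ q) :
    ∫⁻ x, ‖f x‖ₑ ^ q ∂μ ≤ ENNReal.ofReal (M ^ (q - p)) * ∫⁻ x, ‖f x‖ₑ ^ p ∂μ := by
  rw [← lintegral_const_mul' _ _ ENNReal.ofReal_ne_top]
  refine lintegral_mono fun x ↦ ?_
  have hM : 0 ≤ M := (norm_nonneg _).trans (hf x)
  calc ‖f x‖ₑ ^ q = ‖f x‖ₑ ^ (q - p) * ‖f x‖ₑ ^ p := by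
        rw [← ENNReal.rpow_add_of_nonneg _ _ (sub_nonneg.2 hpq) hp, sub_add_cancel]
    _ ≤ ENNReal.ofReal M ^ (q - p) * ‖f x‖ₑ ^ p := by
        gcongr
        rw [← ofReal_norm]
        exact ENNReal.ofReal_le_ofReal (hf x)
    _ = ENNReal.ofReal (M ^ (q - p)) * ‖f x‖ₑ ^ p := by
        rw [ENNReal.ofReal_rpow_of_nonneg hM (sub_nonneg.2 hpq)]

theorem eLpNorm_le_of_norm_le_of_lintegral_le {M A r : ℝ} (hf : ∀ x, ‖f x‖ ≤ M) (hM : 0 ≤ M)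
    (hA : 0 ≤ A) (hL1 : ∫⁻ x, ‖f x‖ₑ ∂μ ≤ ENNReal.ofReal A) (hr : 1 ≤ r) :
    eLpNorm f (ENNReal.ofReal r) μ ≤ ENNReal.ofReal ((M ^ (r - 1) * A) ^ (1 / r)) := by
  have hpow : ∫⁻ x, ‖f x‖ₑ ^ r ∂μ ≤ ENNReal.ofReal (M ^ (r - 1) * A) := by
    refine (lintegral_enorm_rpow_le_of_norm_le hf zero_le_one hr).trans ?_
    rw [ENNReal.ofReal_mul (by positivity)]
    simpa using mul_le_mul_right hL1 _
  rw [eLpNorm_ofReal_eq_lintegral_rpow (by linarith),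
    ← ENNReal.ofReal_rpow_of_nonneg (by positivity) (by positivity)]
  gcongr

theorem ofReal_le_eLpNorm_of_norm_le {M B p : ℝ} (hf : ∀ x, ‖f x‖ ≤ M) (hM : 0 < M) (hB : 0 ≤ B)
    (hL2 : ENNReal.ofReal B ≤ ∫⁻ x, ‖f x‖ₑ ^ (2 : ℝ) ∂μ) (hp : 0 < p) (hp2 : p ≤ 2) :
    ENNReal.ofReal ((B / M ^ (2 - p)) ^ (1 / p)) ≤ eLpNorm f (ENNReal.ofReal p) μ := by
  have hpow : ENNReal.ofReal (B / M ^ (2 - p)) ≤ ∫⁻ x, ‖f x‖ₑ ^ p ∂μ := by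
    rw [ENNReal.ofReal_div_of_pos (by positivity)]
    exact ENNReal.div_le_of_le_mul' (hL2.trans (lintegral_enorm_rpow_le_of_norm_le hf hp.le hp2))
  rw [eLpNorm_ofReal_eq_lintegral_rpow hp,
    ← ENNReal.ofReal_rpow_of_nonneg (by positivity) (by positivity)]
  gcongr

theorem ofReal_le_eLpNorm_of_holderConjugate {B D p q : ℝ} (hf : AEStronglyMeasurable f μ)
    (hpq : p.HolderConjugate q) (hL2 : ENNReal.ofReal B ≤ ∫⁻ x, ‖f x‖ₑ ^ (2 : ℝ) ∂μ)
    (hD : eLpNorm f (ENNReal.ofReal q) μ ≤ ENNReal.ofReal D) (hD₀ : 0 < D) :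
    ENNReal.ofReal (B / D) ≤ eLpNorm f (ENNReal.ofReal p) μ := by
  have holder : ∫⁻ x, ‖f x‖ₑ ^ (2 : ℝ) ∂μ ≤
      eLpNorm f (ENNReal.ofReal p) μ * eLpNorm f (ENNReal.ofReal q) μ := by
    rw [eLpNorm_ofReal_eq_lintegral_rpow hpq.pos, eLpNorm_ofReal_eq_lintegral_rpow hpq.symm.pos]
    convert ENNReal.lintegral_mul_le_Lp_mul_Lq μ hpq hf.enorm hf.enorm using 3 with x
    rw [ENNReal.rpow_two, sq]
    rfl
  rw [ENNReal.ofReal_div_of_pos hD₀]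
  exact ENNReal.div_le_of_le_mul (hL2.trans (holder.trans (by gcongr)))

theorem exists_eLpNorm_asymp_rpow_of_lintegral_bounds (f : ℕ → α → E)
    (hf : ∀ N, AEStronglyMeasurable (f N) μ) {M A B : ℝ} (hB : 0 < B)
    (hM : ∀ N x, ‖f N x‖ ≤ M) (hL1 : ∀ N : ℕ, ∫⁻ x, ‖f N x‖ₑ ∂μ ≤ ENNReal.ofReal (A * N))
    (hL2 : ∀ N : ℕ, ENNReal.ofReal (B * N) ≤ ∫⁻ x, ‖f N x‖ₑ ^ (2 : ℝ) ∂μ) {p : ℝ} (hp : 1 ≤ p) :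
    ∃ c C : ℝ, 0 < c ∧ 0 < C ∧ ∀ N : ℕ, 1 ≤ N →
      ENNReal.ofReal (c * (N : ℝ) ^ (1 / p)) ≤ eLpNorm (f N) (ENNReal.ofReal p) μ ∧
      eLpNorm (f N) (ENNReal.ofReal p) μ ≤ ENNReal.ofReal (C * (N : ℝ) ^ (1 / p)) := by
  set M' := max M 1
  set A' := max A 1
  have hM' (N : ℕ) (x : α) : ‖f N x‖ ≤ M' := (hM N x).trans (le_max_left _ _)
  have upper (r : ℝ) (hr : 1 ≤ r) (N : ℕ) : eLpNorm (f N) (ENNReal.ofReal r) μ ≤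
      ENNReal.ofReal ((M' ^ (r - 1) * A') ^ (1 / r) * (N : ℝ) ^ (1 / r)) := by
    have hL1' : ∫⁻ x, ‖f N x‖ₑ ∂μ ≤ ENNReal.ofReal (A' * N) :=
      (hL1 N).trans (ENNReal.ofReal_le_ofReal (by gcongr; exact le_max_left _ _))
    rw [← Real.mul_rpow (by positivity) (by positivity), mul_assoc]
    exact eLpNorm_le_of_norm_le_of_lintegral_le (hM' N) (by positivity) (by positivity) hL1' hr
  rcases le_or_gt p 2 with hp2 | hp2
  · refine ⟨(B / M' ^ (2 - p)) ^ (1 / p), (M' ^ (p - 1) * A') ^ (1 / p), by positivity,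
      by positivity, fun N _ ↦ ⟨?_, upper p hp N⟩⟩
    rw [← Real.mul_rpow (by positivity) (by positivity), div_mul_eq_mul_div]
    exact ofReal_le_eLpNorm_of_norm_le (hM' N) (by positivity) (by positivity) (hL2 N)
      (by positivity) hp2
  · have hpq : p.HolderConjugate p.conjExponent := .conjExponent (by linarith)
    set q := p.conjExponent
    refine ⟨B / (M' ^ (q - 1) * A') ^ (1 / q), (M' ^ (p - 1) * A') ^ (1 / p), by positivity,
      by positivity, fun N hN ↦ ⟨?_, upper p hp N⟩⟩
    have hN : (0 : ℝ) < N := by exact_mod_cast hN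
    have hsplit : (N : ℝ) ^ (1 / p) * (N : ℝ) ^ (1 / q) = N := by
      rw [← Real.rpow_add hN, one_div, one_div, hpq.inv_add_inv_eq_one, Real.rpow_one]
    convert ofReal_le_eLpNorm_of_holderConjugate (hf N) hpq (hL2 N) (upper q hpq.symm.lt.le N)
      (by positivity) using 2
    nth_rw 2 [← hsplit]
    field_simp

end Interpolation

theorem SchwartzMap.integral_norm_sq_pos {φ : SchwartzMap ℝ ℂ} (hφ : φ ≠ 0) :
    0 < ∫ x, ‖φ x‖ ^ 2 := by
  rw [integral_pos_iff_support_of_nonneg (f := fun x ↦ ‖φ x‖ ^ 2) (fun x ↦ by positivity)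
    ((φ.memLp 2).integrable_norm_pow two_ne_zero)]
  obtain ⟨x, hx⟩ : ∃ x, φ x ≠ 0 := by
    by_contra! h
    exact hφ (SchwartzMap.ext h)
  exact (continuous_norm.comp φ.continuous |>.pow 2).isOpen_support.measure_pos _
    ⟨x, by simpa using hx⟩

noncomputable def wavePacket (φ : ℝ → ℂ) (a x : ℝ) : ℂ :=
  φ (x - a) * Complex.exp (2 * Real.pi * Complex.I * a * x)

namespace wavePacket

variable {φ : ℝ → ℂ}

theorem eq_fourierChar_smul (φ : ℝ → ℂ) (a : ℝ) :
    wavePacket φ a = fun x ↦ 𝐞 (inner ℝ x a) • φ (x - a) := by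
  ext x
  rw [wavePacket, Circle.smul_def, Real.fourierChar_apply, smul_eq_mul, mul_comm]
  congr 2
  simp only [RCLike.inner_apply, Real.ringHom_apply, Complex.ofReal_mul, Complex.ofReal_ofNat]
  ring

theorem norm_apply (φ : ℝ → ℂ) (a x : ℝ) : ‖wavePacket φ a x‖ = ‖φ (x - a)‖ := by
  simp [eq_fourierChar_smul]

theorem norm_fourier_apply (φ : ℝ → ℂ) (a ξ : ℝ) : ‖𝓕 (wavePacket φ a) ξ‖ = ‖𝓕 φ (ξ - a)‖ := by
  rw [eq_fourierChar_smul, Real.fourier_fourierChar_smul, Real.fourier_comp_sub_right,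
    Circle.norm_smul]

theorem continuous (hφ : Continuous φ) (a : ℝ) : Continuous (wavePacket φ a) := by
  unfold wavePacket
  fun_prop

theorem memLp {p : ENNReal} (hφ : MemLp φ p) (a : ℝ) : MemLp (wavePacket φ a) p := by
  have hφa := hφ.comp_measurePreserving (measurePreserving_sub_right volume a)
  refine hφa.congr_norm (hφa.1.mul (by fun_prop)) (ae_of_all _ fun x ↦ (norm_apply φ a x).symm)

theorem integrable (hφ : Integrable φ) (a : ℝ) : Integrable (wavePacket φ a) :=
  memLp_one_iff_integrable.1 (memLp (memLp_one_iff_integrable.2 hφ) a)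

theorem integrable_fourier (hφ : Integrable φ) (hFφ : Integrable (𝓕 φ)) (a : ℝ) :
    Integrable (𝓕 (wavePacket φ a)) :=
  (hFφ.comp_sub_right a).congr' (VectorFourier.fourierIntegral_continuous
      Real.continuous_fourierChar (by fun_prop) (integrable hφ a)).aestronglyMeasurable
    (ae_of_all _ fun ξ ↦ (norm_fourier_apply φ a ξ).symm)

theorem fourier_eq_zero {r a ξ : ℝ} (hsupp : ∀ ξ ∉ Set.Icc (-r) r, 𝓕 φ ξ = 0)
    (hξ : ξ - a ∉ Set.Icc (-r) r) : 𝓕 (wavePacket φ a) ξ = 0 := by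
  rw [← norm_eq_zero, norm_fourier_apply, hsupp _ hξ, norm_zero]

theorem integral_inner_eq_zero (φ : SchwartzMap ℝ ℂ) {r a b : ℝ}
    (hsupp : ∀ ξ ∉ Set.Icc (-r) r, 𝓕 ⇑φ ξ = 0) (hab : 2 * r ≤ |a - b|) :
    ∫ x, inner ℂ (wavePacket φ a x) (wavePacket φ b x) = 0 := by
  rw [← Real.integral_inner_fourier_fourier (integrable φ.integrable a)
    (integrable φ.integrable b) (continuous φ.continuous b)
    (integrable_fourier φ.integrable (𝓕 φ).integrable b)]
  have hoverlap : {ξ | ξ - a ∈ Set.Icc (-r) r ∧ ξ - b ∈ Set.Icc (-r) r}.Subsingleton := by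
    rintro ξ ⟨⟨ha₁, ha₂⟩, hb₁, hb₂⟩ η ⟨⟨ha₃, ha₄⟩, hb₃, hb₄⟩
    rcases le_abs.1 hab with h | h <;> linarith
  refine integral_eq_zero_of_ae ?_
  filter_upwards [measure_eq_zero_iff_ae_notMem.1 (hoverlap.measure_zero volume)] with ξ hξ
  by_cases hξa : ξ - a ∈ Set.Icc (-r) r
  · rw [fourier_eq_zero hsupp fun hξb ↦ hξ ⟨hξa, hξb⟩, inner_zero_right, Pi.zero_apply]
  · rw [fourier_eq_zero hsupp hξa, inner_zero_left, Pi.zero_apply]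

theorem integral_norm_sum_sq (φ : SchwartzMap ℝ ℂ) {r : ℝ}
    (hsupp : ∀ ξ ∉ Set.Icc (-r) r, 𝓕 ⇑φ ξ = 0) {ι : Type*} (s : Finset ι) {a : ι → ℝ}
    (ha : ∀ i ∈ s, ∀ j ∈ s, i ≠ j → 2 * r ≤ |a i - a j|) :
    ∫ x, ‖∑ i ∈ s, wavePacket φ (a i) x‖ ^ 2 = #s * ∫ x, ‖φ x‖ ^ 2 := by
  rw [integral_norm_sum_sq_of_orthogonal s (fun i _ ↦ memLp (φ.memLp 2) (a i))
    fun i hi j hj hij ↦ integral_inner_eq_zero φ hsupp (ha i hi j hj hij)]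
  simp_rw [norm_apply]
  rw [sum_congr rfl fun i _ ↦ integral_sub_right_eq_self (fun x ↦ ‖φ x‖ ^ 2) (a i), sum_const,
    nsmul_eq_mul]

theorem lintegral_enorm_sum_sq (φ : SchwartzMap ℝ ℂ)
    (hsupp : ∀ ξ ∉ Set.Icc (-(1 / 2)) (1 / 2), 𝓕 ⇑φ ξ = 0) (s : Finset ℕ) :
    ∫⁻ x, ‖∑ n ∈ s, wavePacket φ n x‖ₑ ^ (2 : ℝ) = ENNReal.ofReal (#s * ∫ x, ‖φ x‖ ^ 2) := by
  have hsep : ∀ m ∈ s, ∀ n ∈ s, m ≠ n → 2 * (1 / 2) ≤ |(m : ℝ) - n| := by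
    intro m _ n _ hmn
    rw [mul_one_div_cancel two_ne_zero]
    exact_mod_cast Int.one_le_abs (sub_ne_zero.2 (Int.natCast_inj.not.2 hmn))
  have hmem : MemLp (fun x ↦ ∑ n ∈ s, wavePacket φ n x) 2 :=
    memLp_finsetSum s fun (n : ℕ) _ ↦ memLp (φ.memLp 2) n
  rw [← integral_norm_sum_sq φ hsupp s hsep,
    ofReal_integral_eq_lintegral_ofReal (hmem.integrable_norm_pow two_ne_zero)
      (ae_of_all _ fun _ ↦ by positivity)]
  congr 1 with x
  rw [ENNReal.ofReal_pow (norm_nonneg _), ofReal_norm, ENNReal.rpow_two]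

theorem lintegral_enorm_sum_le (hφ : AEMeasurable φ) {ι : Type*} (s : Finset ι) (a : ι → ℝ) :
    ∫⁻ x, ‖∑ i ∈ s, wavePacket φ (a i) x‖ₑ ≤ #s * ∫⁻ x, ‖φ x‖ₑ := by
  calc ∫⁻ x, ‖∑ i ∈ s, wavePacket φ (a i) x‖ₑ ≤ ∫⁻ x, ∑ i ∈ s, ‖φ (x - a i)‖ₑ :=
        lintegral_mono fun x ↦ (enorm_sum_le _ _).trans_eq <| sum_congr rfl fun i _ ↦ by
          simp only [← ofReal_norm, norm_apply]
    _ = ∑ i ∈ s, ∫⁻ x, ‖φ (x - a i)‖ₑ := lintegral_finsetSum' _ fun i _ ↦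
        (hφ.comp_quasiMeasurePreserving (measurePreserving_sub_right volume (a i)).quasiMeasurePreserving).enorm
    _ = #s * ∫⁻ x, ‖φ x‖ₑ := by
        simp [lintegral_sub_right_eq_self (fun x ↦ ‖φ x‖ₑ)]

theorem exists_norm_sum_le (φ : SchwartzMap ℝ ℂ) :
    ∃ M, ∀ (s : Finset ℕ) (x : ℝ), ‖∑ n ∈ s, wavePacket φ n x‖ ≤ M := by
  obtain ⟨M, hM⟩ := exists_sum_norm_comp_sub_int_le φ.continuous one_lt_two
    (by simpa using φ.isBigO_cocompact_rpow (-2))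
  refine ⟨M, fun s x ↦ (norm_sum_le _ _).trans ?_⟩
  simpa [norm_apply] using hM x (s.map Nat.castEmbedding)

end wavePacket

open MeasureTheory FourierTransform in
theorem stmt_9_general (φ : SchwartzMap ℝ ℂ)
    (h1 : ∀ ξ ∈ Set.Icc (-(1/4) : ℝ) (1/4), 𝓕 ⇑φ ξ = 1)
    (h2 : ∀ ξ : ℝ, ξ ∉ Set.Icc (-(1/2) : ℝ) (1/2) → 𝓕 ⇑φ ξ = 0)
    (p : ℝ) (hp : 1 ≤ p) :
    ∃ c C : ℝ, 0 < c ∧ 0 < C ∧ ∀ N : ℕ, 1 ≤ N →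
      ENNReal.ofReal (c * (N : ℝ) ^ (1/p)) ≤
        eLpNorm (fun x : ℝ => ∑ n ∈ Finset.Icc 1 N,
          φ (x - n) * Complex.exp (2 * Real.pi * Complex.I * (n : ℝ) * x))
          (ENNReal.ofReal p) volume ∧
      eLpNorm (fun x : ℝ => ∑ n ∈ Finset.Icc 1 N,
          φ (x - n) * Complex.exp (2 * Real.pi * Complex.I * (n : ℝ) * x))
          (ENNReal.ofReal p) volume ≤
        ENNReal.ofReal (C * (N : ℝ) ^ (1/p)) := by
  have hφ : φ ≠ 0 := by
    rintro rfl
    simpa [Real.fourier_eq] using h1 0 (by norm_num)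
  obtain ⟨M, hM⟩ := wavePacket.exists_norm_sum_le φ
  refine exists_eLpNorm_asymp_rpow_of_lintegral_bounds
    (fun N x ↦ ∑ n ∈ Icc 1 N, wavePacket φ n x) (M := M) (A := ∫ x, ‖φ x‖)
    (fun N ↦ (continuous_finsetSum _ fun (n : ℕ) _ ↦
      wavePacket.continuous φ.continuous n).aestronglyMeasurable)
    (φ.integral_norm_sq_pos hφ) (fun N ↦ hM _) (fun N ↦ ?_) (fun N ↦ ?_) hp
  · refine (wavePacket.lintegral_enorm_sum_le φ.continuous.aemeasurable _ _).trans_eq ?_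
    rw [Nat.card_Icc, add_tsub_cancel_right, ENNReal.ofReal_mul (by positivity),
      ofReal_integral_norm_eq_lintegral_enorm φ.integrable, ENNReal.ofReal_natCast, mul_comm]
  · rw [wavePacket.lintegral_enorm_sum_sq φ h2, Nat.card_Icc, add_tsub_cancel_right, mul_comm]

open MeasureTheory FourierTransform in
/-- For Schwartz `φ` with `1_{[-1/4,1/4]} ≤ φ̂ ≤ 1_{[-1/2,1/2]}` and
`f_N(x) = Σ_{1≤n≤N} φ(x-n)e^{2πinx}`, one has `‖f_N‖_{L^p} ≍_p N^{1/p}` for `1 ≤ p < ∞`. -/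
theorem stmt_9 (φ : SchwartzMap ℝ ℂ)
    (h1 : ∀ ξ ∈ Set.Icc (-(1/4) : ℝ) (1/4), 𝓕 ⇑φ ξ = 1)
    (h2 : ∀ ξ : ℝ, ξ ∉ Set.Icc (-(1/2) : ℝ) (1/2) → 𝓕 ⇑φ ξ = 0)
    (h3 : ∀ ξ : ℝ, (𝓕 ⇑φ ξ).im = 0 ∧ 0 ≤ (𝓕 ⇑φ ξ).re ∧ (𝓕 ⇑φ ξ).re ≤ 1)
    (p : ℝ) (hp : 1 ≤ p) :
    ∃ c C : ℝ, 0 < c ∧ 0 < C ∧ ∀ N : ℕ, 1 ≤ N →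
      ENNReal.ofReal (c * (N : ℝ) ^ (1/p)) ≤
        eLpNorm (fun x : ℝ => ∑ n ∈ Finset.Icc 1 N,
          φ (x - n) * Complex.exp (2 * Real.pi * Complex.I * (n : ℝ) * x))
          (ENNReal.ofReal p) volume ∧
      eLpNorm (fun x : ℝ => ∑ n ∈ Finset.Icc 1 N,
          φ (x - n) * Complex.exp (2 * Real.pi * Complex.I * (n : ℝ) * x))
          (ENNReal.ofReal p) volume ≤
        ENNReal.ofReal (C * (N : ℝ) ^ (1/p)) :=
  stmt_9_general φ h1 h2 p hp
end
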